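/- Let L be a monic real polynomial of degree |n⃗| satisfying the type II Laguerre orthogonality conditions: ∫_0^∞ x^j L(x) x^{α_i} e^{−x} dx = 0 for every i ∈ {1,…,p} and every j ∈ {0,…,n_i−1}. Then for every real x: L(x) e^{−x} = (−1)^{|n⃗|} [∏_{q=1}^p (α_q+1)_{n_q}] · ∑_{l=0}^∞ [∏_{q=1}^p (α_q+n_q+1)_l/(α_q+1)_l] · (−x)^l/l!, where the series on the right converges absolutely. -/

import Mathlib

/-!
Replacing each monomial `X ^ k` of `L` by the rising factorial `(X)_k` gives a polynomial `T` with
`∫₀^∞ L(x) x^(s-1) e^(-x) dx = Γ(s) T(s)`. The orthogonality conditions therefore say that `T`,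
monic of degree `|n|` like `L`, vanishes at the `|n|` points `α_q + j + 1` (`j < n_q`); these are
distinct because `α_i - α_j ∉ ℤ`, so `T(s) = ∏_q ∏_{j<n_q} (s - α_q - j - 1)`. On the other hand
the `l`-th term of the Cauchy product of `L(x) = ∑ L_k x^k` with `e^(-x)` is `T(-l) (-x)^l / l!`,
and `T(-l) = (-1)^|n| ∏_q (α_q + l + 1)_{n_q}`.
-/

open Finset MeasureTheory

/-- The Pochhammer symbol (rising factorial) `(a)_m` for a real number `a`. -/
noncomputable def poch (a : ℝ) (m : ℕ) : ℝ := (ascPochhammer ℝ m).eval a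

open Polynomial Real

lemma poch_zero (a : ℝ) : poch a 0 = 1 := by simp [poch]

lemma poch_succ (a : ℝ) (k : ℕ) : poch a (k + 1) = poch a k * (a + k) :=
  ascPochhammer_succ_eval k a

lemma poch_pos {a : ℝ} (ha : 0 < a) (m : ℕ) : 0 < poch a m := ascPochhammer_pos m a ha

lemma poch_eq_prod_range (a : ℝ) (m : ℕ) : poch a m = ∏ j ∈ range m, (a + j) := by
  induction m with
  | zero => simp [poch_zero]
  | succ m ih => rw [poch_succ, prod_range_succ, ih]

lemma poch_add (a : ℝ) (m l : ℕ) : poch a (m + l) = poch a m * poch (a + m) l := by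
  simpa [poch, eval_comp] using (congrArg (eval a) (ascPochhammer_mul ℝ m l)).symm

lemma poch_mul_poch_add_comm (a : ℝ) (m l : ℕ) :
    poch a m * poch (a + m) l = poch a l * poch (a + l) m := by
  rw [← poch_add, ← poch_add, add_comm]

lemma poch_neg_natCast (l k : ℕ) : poch (-l) k = (-1) ^ k * l.descFactorial k := by
  rw [poch, ascPochhammer_eval_neg_eq_descPochhammer, descPochhammer_eval_eq_descFactorial]

lemma poch_neg_natCast_of_lt {l k : ℕ} (h : l < k) : poch (-l) k = 0 :=
  ascPochhammer_eval_neg_coe_nat_of_lt h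

lemma poch_neg_natCast_mul_pow_div_factorial (k m : ℕ) (x : ℝ) :
    poch (-(k + m : ℕ)) k * (-x) ^ (k + m) / (k + m).factorial
      = x ^ k * (-x) ^ m / m.factorial := by
  have hfac : (m.factorial : ℝ) * (k + m).descFactorial k = (k + m).factorial := by
    have h := Nat.factorial_mul_descFactorial (Nat.le_add_right k m)
    rw [Nat.add_sub_cancel_left] at h
    exact_mod_cast h
  have hD : ((k + m).descFactorial k : ℝ) ≠ 0 := by
    exact_mod_cast (Nat.descFactorial_pos.mpr (Nat.le_add_right k m)).ne'
  have hsign : (-1 : ℝ) ^ k * (-x) ^ k = x ^ k := by rw [← mul_pow]; ring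
  rw [poch_neg_natCast, ← hfac, pow_add, ← hsign]
  field_simp

lemma Gamma_add_natCast {s : ℝ} (hs : 0 < s) (k : ℕ) : Gamma (s + k) = poch s k * Gamma s := by
  induction k with
  | zero => simp [poch_zero]
  | succ k ih =>
    rw [Nat.cast_succ, ← add_assoc, Gamma_add_one (by positivity), ih, poch_succ]
    ring

noncomputable def pochTransform (P : ℝ[X]) : ℝ[X] :=
  ∑ k ∈ range (P.natDegree + 1), C (P.coeff k) * ascPochhammer ℝ k

lemma eval_pochTransform (P : ℝ[X]) (s : ℝ) :
    (pochTransform P).eval s = ∑ k ∈ range (P.natDegree + 1), P.coeff k * poch s k := by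
  simp [pochTransform, eval_finsetSum, poch]

lemma eval_pochTransform_neg_natCast (P : ℝ[X]) (l : ℕ) :
    (pochTransform P).eval (-(l : ℝ)) = ∑ k ∈ range (l + 1), P.coeff k * poch (-l) k := by
  have hP : ∑ k ∈ range (P.natDegree + 1 + l), P.coeff k * poch (-l) k
      = ∑ k ∈ range (P.natDegree + 1), P.coeff k * poch (-l) k :=
    eventually_constant_sum (fun k hk => by
      rw [coeff_eq_zero_of_natDegree_lt (by omega), zero_mul]) (Nat.le_add_right _ _)
  have hl : ∑ k ∈ range (P.natDegree + 1 + l), P.coeff k * poch (-l) k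
      = ∑ k ∈ range (l + 1), P.coeff k * poch (-l) k :=
    eventually_constant_sum (fun k hk => by
      rw [poch_neg_natCast_of_lt (by omega), mul_zero]) (by omega)
  rw [eval_pochTransform, ← hP, hl]

lemma Polynomial.Monic.isMonicOfDegree_pochTransform {P : ℝ[X]} (hP : P.Monic) :
    IsMonicOfDegree (pochTransform P) P.natDegree := by
  have hterm : ∀ k, (C (P.coeff k) * ascPochhammer ℝ k).natDegree ≤ k := fun k =>
    (natDegree_C_mul_le _ _).trans (ascPochhammer_natDegree ℝ k).le
  refine (isMonicOfDegree_iff _ _).mpr ⟨?_, ?_⟩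
  · exact natDegree_sum_le_of_forall_le _ _ fun k hk =>
      (hterm k).trans (Nat.lt_succ_iff.mp (mem_range.mp hk))
  · rw [pochTransform, finsetSum_coeff, sum_eq_single P.natDegree, coeff_C_mul,
      hP.coeff_natDegree, one_mul]
    · simpa [ascPochhammer_natDegree] using (monic_ascPochhammer ℝ P.natDegree).coeff_natDegree
    · intro k hk hne
      exact coeff_eq_zero_of_natDegree_lt
        ((hterm k).trans_lt ((Nat.lt_succ_iff.mp (mem_range.mp hk)).lt_of_ne hne))
    · simp

lemma integral_eval_mul_rpow_mul_exp_neg (P : ℝ[X]) {s : ℝ} (hs : 0 < s) :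
    ∫ x in Set.Ioi (0 : ℝ), P.eval x * x ^ (s - 1) * exp (-x)
      = Gamma s * (pochTransform P).eval s := by
  have hmonomial : ∀ x ∈ Set.Ioi (0 : ℝ), P.eval x * x ^ (s - 1) * exp (-x)
      = ∑ k ∈ range (P.natDegree + 1), P.coeff k * (exp (-x) * x ^ (s + k - 1)) := by
    intro x hx
    rw [eval_eq_sum_range, sum_mul, sum_mul]
    refine sum_congr rfl fun k _ => ?_
    rw [add_sub_right_comm, rpow_add hx, rpow_natCast]
    ring
  have hs' : ∀ k : ℕ, 0 < s + k := fun k => by positivity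
  rw [setIntegral_congr_fun measurableSet_Ioi hmonomial,
    integral_finsetSum _ fun k _ => (GammaIntegral_convergent (hs' k)).const_mul _,
    eval_pochTransform, mul_sum]
  refine sum_congr rfl fun k _ => ?_
  rw [integral_const_mul, ← Gamma_eq_integral (hs' k), Gamma_add_natCast hs]
  ring

section CauchyProduct

variable (P : ℝ[X]) (x : ℝ)

lemma sum_antidiagonal_coeff_mul_pow_mul_pow_div_factorial (l : ℕ) :
    ∑ km ∈ antidiagonal l, P.coeff km.1 * x ^ km.1 * ((-x) ^ km.2 / km.2.factorial)
      = (pochTransform P).eval (-(l : ℝ)) * (-x) ^ l / l.factorial := by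
  rw [eval_pochTransform_neg_natCast, sum_mul, sum_div,
    Nat.sum_antidiagonal_eq_sum_range_succ_mk]
  refine sum_congr rfl fun k hk => ?_
  obtain ⟨m, rfl⟩ := Nat.exists_eq_add_of_le (Nat.le_of_lt_succ (mem_range.mp hk))
  simp only [Nat.add_sub_cancel_left]
  linear_combination -P.coeff k * poch_neg_natCast_mul_pow_div_factorial k m x

lemma summable_norm_coeff_mul_pow : Summable fun k => ‖P.coeff k * x ^ k‖ :=
  summable_of_ne_finset_zero (s := range (P.natDegree + 1)) fun k hk => by
    rw [coeff_eq_zero_of_natDegree_lt (by simpa using hk), zero_mul, norm_zero]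

lemma summable_norm_pow_div_factorial : Summable fun m => ‖(-x) ^ m / m.factorial‖ := by
  simpa [abs_neg] using Real.summable_pow_div_factorial |x|

lemma summable_norm_eval_pochTransform_mul_pow_div_factorial :
    Summable fun l : ℕ => ‖(pochTransform P).eval (-(l : ℝ)) * (-x) ^ l / l.factorial‖ := by
  simpa only [sum_antidiagonal_coeff_mul_pow_mul_pow_div_factorial] using
    summable_norm_sum_mul_antidiagonal_of_summable_norm
      (summable_norm_coeff_mul_pow P x) (summable_norm_pow_div_factorial x)

lemma tsum_eval_pochTransform_mul_pow_div_factorial :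
    ∑' l : ℕ, (pochTransform P).eval (-(l : ℝ)) * (-x) ^ l / l.factorial
      = P.eval x * exp (-x) := by
  have hP : ∑' k, P.coeff k * x ^ k = P.eval x := by
    rw [tsum_eq_sum (s := range (P.natDegree + 1)) fun k hk => by
      rw [coeff_eq_zero_of_natDegree_lt (by simpa using hk), zero_mul], eval_eq_sum_range]
  have hexp : ∑' m, (-x) ^ m / m.factorial = exp (-x) := by
    rw [exp_eq_exp_ℝ, NormedSpace.exp_eq_tsum_div]
  simp_rw [← sum_antidiagonal_coeff_mul_pow_mul_pow_div_factorial, ← hP, ← hexp]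
  exact (tsum_mul_tsum_eq_tsum_sum_antidiagonal_of_summable_norm
    (summable_norm_coeff_mul_pow P x) (summable_norm_pow_div_factorial x)).symm

end CauchyProduct

lemma Polynomial.IsMonicOfDegree.eq_prod_X_sub_C_of_eval_eq_zero {R ι : Type*} [CommRing R]
    [IsDomain R] {s : Finset ι} {v : ι → R} (hv : Set.InjOn v s) {f : R[X]}
    (hf : IsMonicOfDegree f #s)
    (hroot : ∀ i ∈ s, f.eval (v i) = 0) : f = ∏ i ∈ s, (X - C (v i)) := by
  have hprod : IsMonicOfDegree (∏ i ∈ s, (X - C (v i))) #s :=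
    ⟨natDegree_finsetProd_X_sub_C_eq_card s v, monic_prod_X_sub_C v s⟩
  refine eq_of_degree_le_of_eval_index_eq s hv ?_ ?_ ?_ fun i hi => ?_
  · rw [degree_eq_natDegree hf.ne_zero, hf.natDegree_eq]
  · rw [degree_eq_natDegree hf.ne_zero, degree_eq_natDegree hprod.ne_zero, hf.natDegree_eq,
      hprod.natDegree_eq]
  · rw [hf.leadingCoeff_eq, hprod.leadingCoeff_eq]
  · rw [hroot i hi, eval_prod, prod_eq_zero hi (by simp)]

lemma eval_pochTransform_eq_zero_of_integral_eq_zero {P : ℝ[X]} {a : ℝ} (ha : -1 < a) {j : ℕ}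
    (h : ∫ x in Set.Ioi (0 : ℝ), x ^ j * P.eval x * x ^ a * exp (-x) = 0) :
    (pochTransform P).eval (a + j + 1) = 0 := by
  have hs : 0 < a + j + 1 := by linarith [(Nat.cast_nonneg j : (0 : ℝ) ≤ j)]
  have hintegrand : ∀ x ∈ Set.Ioi (0 : ℝ), x ^ j * P.eval x * x ^ a * exp (-x)
      = P.eval x * x ^ (a + j + 1 - 1) * exp (-x) := by
    intro x hx
    rw [add_sub_cancel_right, rpow_add hx, rpow_natCast]
    ring
  rw [setIntegral_congr_fun measurableSet_Ioi hintegrand,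
    integral_eval_mul_rpow_mul_exp_neg P hs] at h
  exact (mul_eq_zero.mp h).resolve_left (Gamma_pos_of_pos hs).ne'

lemma injective_sigma_add_natCast {ι : Type*} {α : ι → ℝ}
    (hα : ∀ i j, i ≠ j → ∀ z : ℤ, α i - α j ≠ z) :
    Function.Injective fun r : (Σ _ : ι, ℕ) => α r.1 + r.2 := by
  rintro ⟨i, j⟩ ⟨i', j'⟩ h
  dsimp only at h
  by_cases hii' : i = i'
  · subst hii'
    rw [add_right_inj, Nat.cast_inj] at h
    rw [h]
  · exact absurd (by push_cast; linarith) (hα i i' hii' (j' - j))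

lemma eval_neg_natCast_prod_sigma {ι : Type*} [Fintype ι] (α : ι → ℝ) (n : ι → ℕ) (l : ℕ) :
    (∏ r ∈ univ.sigma fun q => range (n q), (X - C (α r.1 + r.2 + 1))).eval (-(l : ℝ))
      = (-1) ^ (∑ q, n q) * ∏ q, poch (α q + 1 + l) (n q) := by
  have hfactor : ∀ q, ∀ j ∈ range (n q),
      (X - C (α q + j + 1)).eval (-(l : ℝ)) = -1 * (α q + 1 + l + j) := fun q j _ => by
    simp only [eval_sub, eval_X, eval_C]
    ring
  simp_rw [eval_prod, prod_sigma, prod_congr rfl (hfactor _), prod_mul_distrib, prod_const,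
    card_range, poch_eq_prod_range, prod_pow_eq_pow_sum]

lemma prod_poch_add_one_add_natCast {ι : Type*} [Fintype ι] {α : ι → ℝ} (hα : ∀ q, -1 < α q)
    (n : ι → ℕ) (l : ℕ) :
    ∏ q, poch (α q + 1 + l) (n q)
      = (∏ q, poch (α q + 1) (n q)) * ∏ q, poch (α q + n q + 1) l / poch (α q + 1) l := by
  rw [← prod_mul_distrib]
  refine prod_congr rfl fun q _ => ?_
  have hpos : poch (α q + 1) l ≠ 0 := (poch_pos (by linarith [hα q]) l).ne'
  rw [add_right_comm (α q) (n q : ℝ), mul_div_assoc', poch_mul_poch_add_comm,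
    mul_div_cancel_left₀ _ hpos]

theorem laguerreI_typeII_series_general
    (p : ℕ) (n : Fin p → ℕ)
    (S : ℕ) (hS : S = ∑ i, n i)
    (α : Fin p → ℝ) (hα : ∀ i, -1 < α i)
    (hαint : ∀ i j, i ≠ j → ∀ z : ℤ, α i - α j ≠ (z : ℝ))
    (L : Polynomial ℝ) (hmonic : L.Monic) (hdeg : L.natDegree = S)
    (horth : ∀ i, ∀ j < n i,
      ∫ x in Set.Ioi (0 : ℝ), x ^ j * L.eval x * x ^ α i * Real.exp (-x) = 0) :
    ∀ x : ℝ,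
      Summable (fun l : ℕ =>
        |(∏ q, poch (α q + n q + 1) l / poch (α q + 1) l) * (-x) ^ l /
          (Nat.factorial l : ℝ)|) ∧
      L.eval x * Real.exp (-x) =
        (-1 : ℝ) ^ S * (∏ q, poch (α q + 1) (n q)) *
          ∑' l : ℕ,
            (∏ q, poch (α q + n q + 1) l / poch (α q + 1) l) * (-x) ^ l /
              (Nat.factorial l : ℝ) := by
  intro x
  set zeros := univ.sigma fun q => range (n q)
  have hmonicT : IsMonicOfDegree (pochTransform L) #zeros := by
    rw [card_sigma]
    simpa [hdeg, hS] using hmonic.isMonicOfDegree_pochTransform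
  have hT : pochTransform L = ∏ r ∈ zeros, (X - C (α r.1 + r.2 + 1)) :=
    hmonicT.eq_prod_X_sub_C_of_eval_eq_zero
      ((add_left_injective 1).comp (injective_sigma_add_natCast hαint)).injOn
      fun ⟨q, j⟩ hj => eval_pochTransform_eq_zero_of_integral_eq_zero (hα q)
        (horth q j (by simpa [zeros] using hj))
  set c : ℝ := (-1) ^ S * ∏ q, poch (α q + 1) (n q) with hc
  have hc0 : c ≠ 0 :=
    mul_ne_zero (pow_ne_zero _ (by norm_num))
      (prod_ne_zero_iff.mpr fun q _ => (poch_pos (by linarith [hα q]) _).ne')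
  have hterm : ∀ l : ℕ, (pochTransform L).eval (-(l : ℝ)) * (-x) ^ l / l.factorial
      = c * ((∏ q, poch (α q + n q + 1) l / poch (α q + 1) l) * (-x) ^ l / l.factorial) := by
    intro l
    rw [hT, eval_neg_natCast_prod_sigma, ← hS, prod_poch_add_one_add_natCast hα, hc]
    ring
  clear_value c
  constructor
  · refine ((summable_norm_eval_pochTransform_mul_pow_div_factorial L x).mul_left
      ‖c‖⁻¹).congr fun l => ?_
    rw [hterm, norm_mul, inv_mul_cancel_left₀ (norm_ne_zero_iff.mpr hc0), Real.norm_eq_abs]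
  · rw [← tsum_eval_pochTransform_mul_pow_div_factorial, tsum_congr hterm, tsum_mul_left]

/-- Hypergeometric series representation of the weighted type II Laguerre (first kind)
multiple orthogonal polynomial:
`L(x) e^{−x} = (−1)^{|n|} ∏ (α_q+1)_{n_q} · ∑_l ∏ (α_q+n_q+1)_l/(α_q+1)_l · (−x)^l/l!`,
with the series converging absolutely. -/
theorem laguerreI_typeII_series
    (p : ℕ) (hp : 0 < p) (n : Fin p → ℕ) (hn : ∀ i, 0 < n i)
    (S : ℕ) (hS : S = ∑ i, n i)
    (α : Fin p → ℝ) (hα : ∀ i, -1 < α i)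
    (hαint : ∀ i j, i ≠ j → ∀ z : ℤ, α i - α j ≠ (z : ℝ))
    (L : Polynomial ℝ) (hmonic : L.Monic) (hdeg : L.natDegree = S)
    (horth : ∀ i, ∀ j < n i,
      ∫ x in Set.Ioi (0 : ℝ), x ^ j * L.eval x * x ^ α i * Real.exp (-x) = 0) :
    ∀ x : ℝ,
      Summable (fun l : ℕ =>
        |(∏ q, poch (α q + n q + 1) l / poch (α q + 1) l) * (-x) ^ l /
          (Nat.factorial l : ℝ)|) ∧
      L.eval x * Real.exp (-x) =
        (-1 : ℝ) ^ S * (∏ q, poch (α q + 1) (n q)) *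
          ∑' l : ℕ,
            (∏ q, poch (α q + n q + 1) l / poch (α q + 1) l) * (-x) ^ l /
              (Nat.factorial l : ℝ) :=
  laguerreI_typeII_series_general p n S hS α hα hαint L hmonic hdeg horth
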